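/- arXiv:0803.1708 — 5 statements merged into one kernel-verified Lean document; each statement's English description precedes it below -/
import Mathlib

section
/- For integers m, n ≥ 1 and a real number c ≥ 0, let C = {(x, y) ∈ ℝ^m × ℝ^n : ‖x‖ ≥ c‖y‖}, a closed cone in ℝ^{m+n}. Then for every point (x, y) ∈ ℝ^m × ℝ^n, the Euclidean distance from (x, y) to C equals max(0, c‖y‖ − ‖x‖)/√(1 + c²). -/
theorem aux_cone_ineq (a b c d1 d2 A B : ℝ) (hc : 0 ≤ c) (hd1 : 0 ≤ d1)
    (hd2 : 0 ≤ d2) (hB : 0 ≤ B) (hab : a < c * b) (h1 : A - a ≤ d1)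
    (h2 : b - B ≤ d2) (hz : c * B ≤ A) :
    (c * b - a) ^ 2 ≤ (1 + c ^ 2) * (d1 ^ 2 + d2 ^ 2) := by
  nlinarith [sq_nonneg (d2 - c * d1), sq_nonneg (c * d2 + d1 - (c * b - a)),
    mul_le_mul_of_nonneg_left h2 hc]

/-- distance to the cone `C = {(x,y) : ‖x‖ ≥ c‖y‖}` in
`ℝ^m × ℝ^n` with the Euclidean norm.  For every point `(x, y)`, the Euclidean
distance from `(x, y)` to `C` equals `max(0, c‖y‖ − ‖x‖)/√(1 + c²)`. -/
theorem infDist_to_F_rejection_cone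
    (m n : ℕ) (hm : 1 ≤ m) (hn : 1 ≤ n) (c : ℝ) (hc : 0 ≤ c)
    (C : Set (WithLp 2 (EuclideanSpace ℝ (Fin m) × EuclideanSpace ℝ (Fin n))))
    (hC : C = {z : WithLp 2 (EuclideanSpace ℝ (Fin m) × EuclideanSpace ℝ (Fin n)) |
      c * ‖(WithLp.equiv 2 _ z).2‖ ≤ ‖(WithLp.equiv 2 _ z).1‖}) :
    ∀ (x : EuclideanSpace ℝ (Fin m)) (y : EuclideanSpace ℝ (Fin n)),
      Metric.infDist ((WithLp.equiv 2
          (EuclideanSpace ℝ (Fin m) × EuclideanSpace ℝ (Fin n))).symm (x, y)) C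
        = max 0 (c * ‖y‖ - ‖x‖) / Real.sqrt (1 + c ^ 2) := by
  intro x y
  set a := ‖x‖ with ha
  set b := ‖y‖ with hb
  have ha0 : 0 ≤ a := norm_nonneg _
  have hb0 : 0 ≤ b := norm_nonneg _
  have hs : (0:ℝ) < 1 + c ^ 2 := by positivity
  have hsq : (0:ℝ) < Real.sqrt (1 + c ^ 2) := Real.sqrt_pos.mpr hs
  by_cases hmem : c * b ≤ a
  · have : ((WithLp.equiv 2 (EuclideanSpace ℝ (Fin m) × EuclideanSpace ℝ (Fin n))).symm (x, y)) ∈ C := by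
      rw [hC]; simpa using hmem
    rw [Metric.infDist_zero_of_mem this, max_eq_left (by linarith), zero_div]
  push_neg at hmem
  have hbpos : 0 < b := by
    by_contra h
    push_neg at h
    have : b = 0 := le_antisymm h hb0
    rw [this] at hmem; simp at hmem; linarith
  have hmax : max 0 (c * b - a) = c * b - a := max_eq_right (by linarith)
  rw [hmax]
  -- candidate nearest point
  set v := (c * a + b) / (1 + c ^ 2) with hv
  set u := c * v with hu
  have hv0 : 0 ≤ v := by positivity
  have hu0 : 0 ≤ u := by positivity
  obtain ⟨w, hwnorm, hxw⟩ : ∃ w : EuclideanSpace ℝ (Fin m), ‖w‖ = 1 ∧ x = a • w := by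
    rcases eq_or_ne x 0 with hx | hx
    · refine ⟨EuclideanSpace.single ⟨0, hm⟩ (1:ℝ), by simp, ?_⟩
      simp [hx, ha]
    · have hane : a ≠ 0 := by simpa [ha] using norm_ne_zero_iff.mpr hx
      refine ⟨a⁻¹ • x, ?_, ?_⟩
      · rw [norm_smul, norm_inv, Real.norm_eq_abs, abs_of_nonneg ha0, ← ha,
          inv_mul_cancel₀ hane]
      · rw [smul_smul, mul_inv_cancel₀ hane, one_smul]
  set x' : EuclideanSpace ℝ (Fin m) := u • w with hx'
  set y' : EuclideanSpace ℝ (Fin n) := (v / b) • y with hy'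
  have hx'n : ‖x'‖ = u := by
    rw [hx', norm_smul, hwnorm, Real.norm_eq_abs, abs_of_nonneg hu0, mul_one]
  have hy'n : ‖y'‖ = v := by
    rw [hy', norm_smul, Real.norm_eq_abs, abs_of_nonneg (by positivity), ← hb]
    field_simp
  set q := (WithLp.equiv 2 (EuclideanSpace ℝ (Fin m) × EuclideanSpace ℝ (Fin n))).symm (x', y') with hq
  have hqC : q ∈ C := by
    rw [hC]
    simp only [Set.mem_setOf_eq, hq, Equiv.apply_symm_apply]
    rw [hx'n, hy'n, hu]
  have hCne : C.Nonempty := ⟨q, hqC⟩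
  set p := (WithLp.equiv 2 (EuclideanSpace ℝ (Fin m) × EuclideanSpace ℝ (Fin n))).symm (x, y) with hp
  have key : ((c * b - a) / Real.sqrt (1 + c ^ 2)) ^ 2 = (a - u) ^ 2 + (b - v) ^ 2 := by
    rw [div_pow, Real.sq_sqrt hs.le, hu, hv]
    field_simp
    ring
  apply le_antisymm
  · -- upper bound
    calc Metric.infDist p C ≤ dist p q := Metric.infDist_le_dist_of_mem hqC
    _ = Real.sqrt (dist x x' ^ 2 + dist y y' ^ 2) := by
        rw [hp, hq, WithLp.prod_dist_eq_of_L2]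
        rfl
    _ = (c * b - a) / Real.sqrt (1 + c ^ 2) := by
        have h1 : dist x x' = |a - u| := by
          rw [hxw, hx', dist_eq_norm, ← sub_smul, norm_smul, hwnorm, mul_one, Real.norm_eq_abs]
        have h2 : dist y y' = |b - v| := by
          rw [hy', dist_eq_norm]
          have : y - (v / b) • y = (1 - v / b) • y := by
            rw [sub_smul, one_smul]
          have h3 : (1 - v / b) = (b - v) / b := by field_simp
          rw [this, h3, norm_smul, Real.norm_eq_abs, ← hb, abs_div,
            abs_of_pos hbpos, div_mul_cancel₀ _ hbpos.ne']
        rw [h1, h2, sq_abs, sq_abs, ← key]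
        exact Real.sqrt_sq (div_nonneg (by linarith) hsq.le)
  · -- lower bound
    rw [Metric.infDist_eq_iInf]
    have : Nonempty C := hCne.to_subtype
    apply le_ciInf
    rintro ⟨z, hz⟩
    rw [hC] at hz
    simp only [Set.mem_setOf_eq] at hz
    set z1 := (WithLp.equiv 2 (EuclideanSpace ℝ (Fin m) × EuclideanSpace ℝ (Fin n)) z).1 with hz1
    set z2 := (WithLp.equiv 2 (EuclideanSpace ℝ (Fin m) × EuclideanSpace ℝ (Fin n)) z).2 with hz2
    have hdist : dist p z = Real.sqrt (dist x z1 ^ 2 + dist y z2 ^ 2) := by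
      rw [hp, WithLp.prod_dist_eq_of_L2]
      rfl
    have h1 : ‖z1‖ - a ≤ dist x z1 := by
      have h := abs_norm_sub_norm_le z1 x
      rw [dist_eq_norm, norm_sub_rev]
      calc ‖z1‖ - a ≤ |‖z1‖ - ‖x‖| := le_abs_self _
        _ ≤ ‖z1 - x‖ := h
    have h2 : b - ‖z2‖ ≤ dist y z2 := by
      have h := abs_norm_sub_norm_le y z2
      rw [dist_eq_norm]
      calc b - ‖z2‖ ≤ |‖y‖ - ‖z2‖| := le_abs_self _
        _ ≤ ‖y - z2‖ := h
    rw [hdist]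
    apply Real.le_sqrt_of_sq_le
    have hd1 : (0:ℝ) ≤ dist x z1 := dist_nonneg
    have hd2 : (0:ℝ) ≤ dist y z2 := dist_nonneg
    have hz2n : (0:ℝ) ≤ ‖z2‖ := norm_nonneg _
    rw [div_pow, Real.sq_sqrt hs.le, div_le_iff₀ hs]
    rw [mul_comm _ (1 + c ^ 2)]
    exact aux_cone_ineq a b c (dist x z1) (dist y z2) ‖z1‖ ‖z2‖ hc hd1 hd2 hz2n hmem h1 h2 hz
end

section
/- Let m, n ≥ 1, let Z = (Z_a, Z_b) be a random vector in ℝ^m × ℝ^n whose m + n coordinates are independent standard normal random variables, let c ≥ 0 and C = {(x, y) ∈ ℝ^m × ℝ^n : ‖x‖ ≥ c‖y‖}. Then for every ε ≥ 0, ℙ(Z ∈ Tube(C, ε)) = ℙ(‖Z_a‖ ≥ c‖Z_b‖ − ε√(1 + c²)). -/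
/-!
The tube event does not depend on the law of `Z`: the distance from `(x, y)` to the cone is
exactly `max ((c‖y‖ - ‖x‖) / √(1 + c²)) 0`. The lower bound is the triangle inequality in each
factor followed by Cauchy–Schwarz, `a + c b ≤ √(1 + c²) √(a² + b²)`. It is attained by moving `x`
radially outward by `t` and `y` radially inward by `t c`, where `t = (c‖y‖ - ‖x‖) / (1 + c²)`.
-/

open MeasureTheory

theorem add_mul_le_sqrt_one_add_sq_mul_sqrt (a b c : ℝ) :
    a + c * b ≤ √(1 + c ^ 2) * √(a ^ 2 + b ^ 2) := by
  rw [← Real.sqrt_mul (by positivity)]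
  exact Real.le_sqrt_of_sq_le (by nlinarith [sq_nonneg (c * a - b)])

theorem exists_norm_eq_and_dist_eq_abs_sub {E : Type*} [NormedAddCommGroup E]
    [NormedSpace ℝ E] [Nontrivial E] (x : E) {r : ℝ} (hr : 0 ≤ r) :
    ∃ x' : E, ‖x'‖ = r ∧ dist x x' = |‖x‖ - r| := by
  obtain ⟨u, hu, hxu⟩ : ∃ u : E, ‖u‖ = 1 ∧ ‖x‖ • u = x := by
    rcases eq_or_ne x 0 with rfl | hx
    · obtain ⟨u, hu⟩ := exists_norm_eq E zero_le_one
      exact ⟨u, hu, by simp⟩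
    · exact ⟨‖x‖⁻¹ • x, by simp [norm_smul, norm_ne_zero_iff.2 hx],
        by simp [smul_smul, norm_ne_zero_iff.2 hx]⟩
  refine ⟨r • u, by simp [norm_smul, hu, abs_of_nonneg hr], ?_⟩
  calc dist x (r • u) = ‖(‖x‖ - r) • u‖ := by rw [dist_eq_norm, sub_smul, hxu]
    _ = |‖x‖ - r| := by rw [norm_smul, hu, mul_one, Real.norm_eq_abs]

section Cone

variable {E F : Type*}

def normRatioCone [Norm E] [Norm F] (c : ℝ) : Set (WithLp 2 (E × F)) :=
  {z | c * ‖z.snd‖ ≤ ‖z.fst‖}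

theorem sub_le_sqrt_mul_dist_of_mem_normRatioCone [SeminormedAddCommGroup E]
    [SeminormedAddCommGroup F] {c : ℝ} (hc : 0 ≤ c) (z : WithLp 2 (E × F))
    {w : WithLp 2 (E × F)} (hw : w ∈ normRatioCone c) :
    c * ‖z.snd‖ - ‖z.fst‖ ≤ √(1 + c ^ 2) * dist z w := by
  have hfst : ‖w.fst‖ - ‖z.fst‖ ≤ dist z.fst w.fst :=
    (norm_sub_norm_le _ _).trans_eq (dist_eq_norm' _ _).symm
  have hsnd : ‖z.snd‖ - ‖w.snd‖ ≤ dist z.snd w.snd :=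
    (norm_sub_norm_le _ _).trans_eq (dist_eq_norm _ _).symm
  calc c * ‖z.snd‖ - ‖z.fst‖ ≤ dist z.fst w.fst + c * dist z.snd w.snd := by
        have : c * ‖w.snd‖ ≤ ‖w.fst‖ := hw
        nlinarith
    _ ≤ √(1 + c ^ 2) * dist z w := by
        rw [WithLp.prod_dist_eq_of_L2]
        exact add_mul_le_sqrt_one_add_sq_mul_sqrt _ _ c

theorem exists_mem_normRatioCone_sqrt_mul_dist_eq [NormedAddCommGroup E] [NormedSpace ℝ E]
    [Nontrivial E] [NormedAddCommGroup F] [NormedSpace ℝ F] {c : ℝ} (hc : 0 ≤ c)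
    {z : WithLp 2 (E × F)} (hz : z ∉ normRatioCone c) :
    ∃ w ∈ normRatioCone c, √(1 + c ^ 2) * dist z w = c * ‖z.snd‖ - ‖z.fst‖ := by
  replace hz : ‖z.fst‖ < c * ‖z.snd‖ := lt_of_not_ge hz
  have hy : z.snd ≠ 0 := fun h => by simp [h] at hz; linarith [norm_nonneg z.fst]
  have : Nontrivial F := nontrivial_of_ne _ _ hy
  set t := (c * ‖z.snd‖ - ‖z.fst‖) / (1 + c ^ 2) with ht
  have ht0 : 0 < t := div_pos (by linarith) (by positivity)
  have htc : t * c ≤ ‖z.snd‖ := by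
    rw [ht, div_mul_eq_mul_div, div_le_iff₀ (by positivity)]
    nlinarith [norm_nonneg z.fst, norm_nonneg z.snd]
  obtain ⟨x', hx', hdx⟩ :=
    exists_norm_eq_and_dist_eq_abs_sub z.fst (r := ‖z.fst‖ + t) (by positivity)
  obtain ⟨y', hy', hdy⟩ := exists_norm_eq_and_dist_eq_abs_sub z.snd (sub_nonneg.2 htc)
  refine ⟨WithLp.toLp 2 (x', y'), ?_, ?_⟩
  · show c * ‖y'‖ ≤ ‖x'‖
    rw [hx', hy']
    have : t * (1 + c ^ 2) = c * ‖z.snd‖ - ‖z.fst‖ := div_mul_cancel₀ _ (by positivity)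
    nlinarith
  · rw [WithLp.prod_dist_eq_of_L2]
    show √(1 + c ^ 2) * √(dist z.fst x' ^ 2 + dist z.snd y' ^ 2) = _
    rw [hdx, hdy, sq_abs, sq_abs, show ‖z.fst‖ - (‖z.fst‖ + t) = -t by ring,
      show ‖z.snd‖ - (‖z.snd‖ - t * c) = t * c by ring, neg_sq,
      show t ^ 2 + (t * c) ^ 2 = (1 + c ^ 2) * t ^ 2 by ring, Real.sqrt_mul (by positivity),
      Real.sqrt_sq ht0.le, ← mul_assoc, Real.mul_self_sqrt (by positivity), ht,
      mul_div_cancel₀ _ (by positivity)]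

end Cone

section Tube

variable {E F : Type*} [NormedAddCommGroup E] [NormedSpace ℝ E] [Nontrivial E]
  [NormedAddCommGroup F] [NormedSpace ℝ F] {c : ℝ}

theorem infDist_normRatioCone (hc : 0 ≤ c) (z : WithLp 2 (E × F)) :
    Metric.infDist z (normRatioCone c) = max ((c * ‖z.snd‖ - ‖z.fst‖) / √(1 + c ^ 2)) 0 := by
  have hs : 0 < √(1 + c ^ 2) := by positivity
  have hne : (normRatioCone c : Set (WithLp 2 (E × F))).Nonempty :=
    ⟨0, by simp [normRatioCone]⟩
  refine le_antisymm ?_ (max_le ?_ Metric.infDist_nonneg)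
  · by_cases hz : z ∈ normRatioCone c
    · exact (Metric.infDist_zero_of_mem hz).trans_le (le_max_right _ _)
    · obtain ⟨w, hw, hdist⟩ := exists_mem_normRatioCone_sqrt_mul_dist_eq hc hz
      calc Metric.infDist z (normRatioCone c) ≤ dist z w := Metric.infDist_le_dist_of_mem hw
        _ = (c * ‖z.snd‖ - ‖z.fst‖) / √(1 + c ^ 2) := by
          rw [← hdist, mul_div_cancel_left₀ _ hs.ne']
        _ ≤ _ := le_max_left _ _
  · exact (Metric.le_infDist hne).2 fun w hw =>
      (div_le_iff₀' hs).2 (sub_le_sqrt_mul_dist_of_mem_normRatioCone hc z hw)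

theorem infDist_normRatioCone_le_iff (hc : 0 ≤ c) {ε : ℝ} (hε : 0 ≤ ε) (z : WithLp 2 (E × F)) :
    Metric.infDist z (normRatioCone c) ≤ ε ↔ c * ‖z.snd‖ - ε * √(1 + c ^ 2) ≤ ‖z.fst‖ := by
  rw [infDist_normRatioCone hc, max_le_iff, div_le_iff₀ (by positivity)]
  constructor
  · exact fun h => by linarith [h.1]
  · exact fun h => ⟨by linarith, hε⟩

end Tube

theorem tube_probability_of_F_rejection_cone_general
    (m n : ℕ) (hm : 1 ≤ m) (c : ℝ) (hc : 0 ≤ c)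
    [mW : MeasurableSpace (WithLp 2 (EuclideanSpace ℝ (Fin m) × EuclideanSpace ℝ (Fin n)))]
    (μ : Measure (WithLp 2 (EuclideanSpace ℝ (Fin m) × EuclideanSpace ℝ (Fin n))))
    (C : Set (WithLp 2 (EuclideanSpace ℝ (Fin m) × EuclideanSpace ℝ (Fin n))))
    (hC : C = {z : WithLp 2 (EuclideanSpace ℝ (Fin m) × EuclideanSpace ℝ (Fin n)) |
      c * ‖(WithLp.equiv 2 _ z).2‖ ≤ ‖(WithLp.equiv 2 _ z).1‖})
    (ε : ℝ) (hε : 0 ≤ ε) :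
    μ {z : WithLp 2 (EuclideanSpace ℝ (Fin m) × EuclideanSpace ℝ (Fin n)) |
        Metric.infDist z C ≤ ε}
      = μ {z : WithLp 2 (EuclideanSpace ℝ (Fin m) × EuclideanSpace ℝ (Fin n)) |
        c * ‖(WithLp.equiv 2 _ z).2‖ - ε * Real.sqrt (1 + c ^ 2)
          ≤ ‖(WithLp.equiv 2 _ z).1‖} := by
  have : NeZero m := ⟨by omega⟩
  subst hC
  congr 1
  ext z
  exact infDist_normRatioCone_le_iff hc hε z

/-- the exact tube probability for the F-statistic rejection
cone.  Let `Z = (Z_a, Z_b)` be a random vector in `ℝ^m × ℝ^n` (Euclidean norm)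
whose `m + n` coordinates are independent standard normals, let `c ≥ 0` and
`C = {(x,y) : ‖x‖ ≥ c‖y‖}`.  Then for every `ε ≥ 0`,
`ℙ(Z ∈ Tube(C, ε)) = ℙ(‖Z_a‖ ≥ c‖Z_b‖ − ε√(1+c²))`. -/
theorem tube_probability_of_F_rejection_cone
    (m n : ℕ) (hm : 1 ≤ m) (hn : 1 ≤ n) (c : ℝ) (hc : 0 ≤ c)
    [mW : MeasurableSpace (WithLp 2 (EuclideanSpace ℝ (Fin m) × EuclideanSpace ℝ (Fin n)))]
    [BorelSpace (WithLp 2 (EuclideanSpace ℝ (Fin m) × EuclideanSpace ℝ (Fin n)))]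
    (μ : Measure (WithLp 2 (EuclideanSpace ℝ (Fin m) × EuclideanSpace ℝ (Fin n))))
    (hμ : μ = ((Measure.pi fun _ : Fin m => ProbabilityTheory.gaussianReal 0 1).prod
        (Measure.pi fun _ : Fin n => ProbabilityTheory.gaussianReal 0 1)).map
        (fun z : (Fin m → ℝ) × (Fin n → ℝ) =>
          (WithLp.equiv 2 (EuclideanSpace ℝ (Fin m) × EuclideanSpace ℝ (Fin n))).symm
            ((EuclideanSpace.equiv (Fin m) ℝ).symm z.1,
             (EuclideanSpace.equiv (Fin n) ℝ).symm z.2)))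
    (C : Set (WithLp 2 (EuclideanSpace ℝ (Fin m) × EuclideanSpace ℝ (Fin n))))
    (hC : C = {z : WithLp 2 (EuclideanSpace ℝ (Fin m) × EuclideanSpace ℝ (Fin n)) |
      c * ‖(WithLp.equiv 2 _ z).2‖ ≤ ‖(WithLp.equiv 2 _ z).1‖})
    (ε : ℝ) (hε : 0 ≤ ε) :
    μ {z : WithLp 2 (EuclideanSpace ℝ (Fin m) × EuclideanSpace ℝ (Fin n)) |
        Metric.infDist z C ≤ ε}
      = μ {z : WithLp 2 (EuclideanSpace ℝ (Fin m) × EuclideanSpace ℝ (Fin n)) |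
        c * ‖(WithLp.equiv 2 _ z).2‖ - ε * Real.sqrt (1 + c ^ 2)
          ≤ ‖(WithLp.equiv 2 _ z).1‖} :=
  tube_probability_of_F_rejection_cone_general m n hm c hc (mW := mW) μ C hC ε hε
end

section
/- Let X be an n × c and Y an n × d real matrix such that XᵀX and YᵀY are positive definite. Then the supremum over nonzero u ∈ ℝ^c and nonzero v ∈ ℝ^d of uᵀXᵀYv / √((uᵀXᵀXu)(vᵀYᵀYv)) is attained and equals the largest singular value of Q = (XᵀX)^{−1/2} XᵀY (YᵀY)^{−1/2}, that is, the square root of the largest eigenvalue of QᵀQ. -/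
open Matrix

open scoped ComplexOrder in
/-- The positive semidefinite square root of a positive semidefinite matrix
(as `Matrix.PosSemidef.sqrt` was defined in Mathlib of December 2024). -/
noncomputable def Matrix.PosSemidef.sqrt {n 𝕜 : Type*} [Fintype n] [DecidableEq n] [RCLike 𝕜]
    {A : Matrix n n 𝕜} (hA : A.PosSemidef) : Matrix n n 𝕜 :=
  (hA.1.eigenvectorUnitary : Matrix n n 𝕜) *
    diagonal ((↑) ∘ Real.sqrt ∘ hA.1.eigenvalues) *
    (star hA.1.eigenvectorUnitary : Matrix n n 𝕜)

/-!
Writing `a = (XᵀX)^{1/2} u` and `b = (YᵀY)^{1/2} v`, the ratio becomes `aᵀ Q b / (‖a‖ ‖b‖)`, and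
`u ↦ a`, `v ↦ b` are bijections. By Cauchy–Schwarz and the Rayleigh bound
`‖Q b‖² = bᵀ QᵀQ b ≤ λ ‖b‖²` for the top eigenvalue `λ` of the symmetric matrix `QᵀQ`, this is at
most `√λ`, with equality for `b` a top eigenvector `w` and `a = Q w` (any `a` if `Q w = 0`).
-/

namespace Matrix

section DotProduct

variable {l m n R : Type*} [Fintype l] [Fintype m] [Fintype n]

lemma mulVec_dotProduct_mulVec [CommSemiring R] (A : Matrix l m R) (B : Matrix l n R)
    (x : m → R) (y : n → R) : (A *ᵥ x) ⬝ᵥ (B *ᵥ y) = x ⬝ᵥ (Aᵀ * B) *ᵥ y := by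
  rw [← mulVec_mulVec, dotProduct_mulVec x, vecMul_transpose]

lemma dotProduct_transpose_mul_mul_mulVec {p : Type*} [Fintype p] [CommSemiring R]
    (A : Matrix l m R) (K : Matrix l p R) (B : Matrix p n R) (x : m → R) (y : n → R) :
    x ⬝ᵥ (Aᵀ * K * B) *ᵥ y = (A *ᵥ x) ⬝ᵥ K *ᵥ (B *ᵥ y) := by
  rw [mulVec_mulVec, mulVec_dotProduct_mulVec, Matrix.mul_assoc]

lemma dotProduct_diagonal_mulVec_le [DecidableEq n] [CommRing R] [LinearOrder R]
    [IsStrictOrderedRing R] {d : n → R} {μ : R} (hd : ∀ i, d i ≤ μ) (w : n → R) :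
    w ⬝ᵥ diagonal d *ᵥ w ≤ μ * (w ⬝ᵥ w) := by
  simp only [dotProduct, mulVec_diagonal, Finset.mul_sum]
  refine Finset.sum_le_sum fun i _ => ?_
  nlinarith [hd i, mul_self_nonneg (w i)]

lemma dotProduct_self_nonneg [Ring R] [LinearOrder R] [IsStrictOrderedRing R] (v : n → R) :
    0 ≤ v ⬝ᵥ v :=
  Finset.sum_nonneg fun i _ => mul_self_nonneg (v i)

lemma dotProduct_self_pos [Ring R] [LinearOrder R] [IsStrictOrderedRing R] {v : n → R}
    (hv : v ≠ 0) : 0 < v ⬝ᵥ v :=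
  (dotProduct_self_nonneg v).lt_of_ne
    (Ne.symm (mt dotProduct_self_eq_zero.mp hv))

lemma dotProduct_le_sqrt_mul_sqrt (a b : n → ℝ) : a ⬝ᵥ b ≤ √(a ⬝ᵥ a) * √(b ⬝ᵥ b) := by
  simpa only [dotProduct, sq] using Real.sum_mul_le_sqrt_mul_sqrt Finset.univ a b

end DotProduct

open scoped ComplexOrder

namespace PosSemidef

variable {n 𝕜 : Type*} [Fintype n] [DecidableEq n] [RCLike 𝕜] {A : Matrix n n 𝕜}

lemma conjTranspose_sqrt (hA : A.PosSemidef) : hA.sqrtᴴ = hA.sqrt := by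
  have hD : star ((↑) ∘ Real.sqrt ∘ hA.1.eigenvalues : n → 𝕜) =
      (↑) ∘ Real.sqrt ∘ hA.1.eigenvalues := by
    ext i; simp
  simp only [sqrt, star_eq_conjTranspose, conjTranspose_mul, diagonal_conjTranspose, hD,
    conjTranspose_conjTranspose, Matrix.mul_assoc]

lemma sqrt_mul_self (hA : A.PosSemidef) : hA.sqrt * hA.sqrt = A := by
  have hU : (star hA.1.eigenvectorUnitary : Matrix n n 𝕜) * hA.1.eigenvectorUnitary = 1 :=
    Unitary.coe_star_mul_self _
  have hD : diagonal ((↑) ∘ Real.sqrt ∘ hA.1.eigenvalues : n → 𝕜) *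
      diagonal ((↑) ∘ Real.sqrt ∘ hA.1.eigenvalues) = diagonal ((↑) ∘ hA.1.eigenvalues) := by
    rw [diagonal_mul_diagonal]
    congr 1 with i
    simp [← RCLike.ofReal_mul, Real.mul_self_sqrt (hA.eigenvalues_nonneg i)]
  conv_rhs => rw [hA.1.spectral_theorem, Unitary.conjStarAlgAut_apply]
  simp only [sqrt, Matrix.mul_assoc]
  rw [← Matrix.mul_assoc (star _ : Matrix n n 𝕜) _ _, hU, Matrix.one_mul,
    ← Matrix.mul_assoc (diagonal _) (diagonal _), hD]

end PosSemidef

lemma PosSemidef.transpose_sqrt {n : Type*} [Fintype n] [DecidableEq n] {A : Matrix n n ℝ}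
    (hA : A.PosSemidef) : hA.sqrtᵀ = hA.sqrt :=
  PosSemidef.conjTranspose_sqrt hA

lemma PosDef.isUnit_sqrt {n 𝕜 : Type*} [Fintype n] [DecidableEq n] [RCLike 𝕜]
    {A : Matrix n n 𝕜} (hA : A.PosDef) : IsUnit hA.posSemidef.sqrt := by
  rw [isUnit_iff_isUnit_det]
  refine isUnit_of_mul_isUnit_left (y := hA.posSemidef.sqrt.det) ?_
  rw [← det_mul, PosSemidef.sqrt_mul_self]
  exact (isUnit_iff_isUnit_det A).mp hA.isUnit

section Eigen

variable {n : Type*} [Fintype n]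

lemma IsHermitian.dotProduct_mulVec_le [DecidableEq n] {M : Matrix n n ℝ} (hM : M.IsHermitian)
    {μ : ℝ} (hμ : ∀ i, hM.eigenvalues i ≤ μ) (v : n → ℝ) : v ⬝ᵥ M *ᵥ v ≤ μ * (v ⬝ᵥ v) := by
  set U : Matrix n n ℝ := ↑hM.eigenvectorUnitary
  have hUU : U * Uᵀ = 1 := Unitary.coe_mul_star_self _
  have hM' : M = U * diagonal hM.eigenvalues * Uᵀ := by
    conv_lhs => rw [hM.spectral_theorem, Unitary.conjStarAlgAut_apply]
    rfl
  have hquad : v ⬝ᵥ M *ᵥ v = (Uᵀ *ᵥ v) ⬝ᵥ diagonal hM.eigenvalues *ᵥ (Uᵀ *ᵥ v) := by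
    rw [← dotProduct_transpose_mul_mul_mulVec, transpose_transpose, ← hM']
  have hnorm : (Uᵀ *ᵥ v) ⬝ᵥ (Uᵀ *ᵥ v) = v ⬝ᵥ v := by
    rw [mulVec_dotProduct_mulVec, transpose_transpose, hUU, one_mulVec]
  rw [hquad, ← hnorm]
  exact dotProduct_diagonal_mulVec_le hμ _

lemma IsHermitian.exists_eigenvector_forall_dotProduct_mulVec_le [DecidableEq n] [Nonempty n]
    {M : Matrix n n ℝ} (hM : M.IsHermitian) :
    ∃ μ w, w ≠ 0 ∧ M *ᵥ w = μ • w ∧ ∀ v, v ⬝ᵥ M *ᵥ v ≤ μ * (v ⬝ᵥ v) := by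
  obtain ⟨i, hi⟩ := Finite.exists_max hM.eigenvalues
  refine ⟨_, _, ?_, hM.mulVec_eigenvectorBasis i, hM.dotProduct_mulVec_le hi⟩
  simpa using hM.eigenvectorBasis.orthonormal.ne_zero i

variable {R : Type*} [Field R] [LinearOrder R] [IsStrictOrderedRing R]

lemma isGreatest_eigenvalues_of_forall_dotProduct_mulVec_le {M : Matrix n n R} {μ : R}
    {w : n → R} (hw : w ≠ 0) (hMw : M *ᵥ w = μ • w)
    (hμ : ∀ v, v ⬝ᵥ M *ᵥ v ≤ μ * (v ⬝ᵥ v)) :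
    IsGreatest {lam | ∃ v, v ≠ 0 ∧ M *ᵥ v = lam • v} μ := by
  refine ⟨⟨w, hw, hMw⟩, ?_⟩
  rintro lam ⟨v, hv, hMv⟩
  refine le_of_mul_le_mul_right ?_ (dotProduct_self_pos hv)
  simpa [hMv, dotProduct_smul] using hμ v

end Eigen

end Matrix

section CorrelationRatios

variable {m n : Type*} [Fintype m] [Fintype n]

def correlationRatios (K : Matrix m n ℝ) (G : Matrix m m ℝ) (H : Matrix n n ℝ) : Set ℝ :=
  {r | ∃ u v, u ≠ 0 ∧ v ≠ 0 ∧ r = u ⬝ᵥ K *ᵥ v / √((u ⬝ᵥ G *ᵥ u) * (v ⬝ᵥ H *ᵥ v))}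

lemma correlationRatios_transpose_mul_mul [DecidableEq m] [DecidableEq n]
    (K : Matrix m n ℝ) (G : Matrix m m ℝ) (H : Matrix n n ℝ) {A : Matrix m m ℝ}
    {B : Matrix n n ℝ} (hA : IsUnit A) (hB : IsUnit B) :
    correlationRatios (Aᵀ * K * B) (Aᵀ * G * A) (Bᵀ * H * B) = correlationRatios K G H := by
  ext r
  simp only [correlationRatios, dotProduct_transpose_mul_mul_mulVec]
  constructor
  · rintro ⟨u, v, hu, hv, rfl⟩
    exact ⟨A *ᵥ u, B *ᵥ v, (mulVec_injective_iff_isUnit.mpr hA).ne_iff' (mulVec_zero A) |>.mpr hu,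
      (mulVec_injective_iff_isUnit.mpr hB).ne_iff' (mulVec_zero B) |>.mpr hv, rfl⟩
  · rintro ⟨a, b, ha, hb, rfl⟩
    obtain ⟨u, rfl⟩ := mulVec_surjective_iff_isUnit.mpr hA a
    obtain ⟨v, rfl⟩ := mulVec_surjective_iff_isUnit.mpr hB b
    exact ⟨u, v, by rintro rfl; simp at ha, by rintro rfl; simp at hb, rfl⟩

variable {Q : Matrix m n ℝ} {μ : ℝ} {w : n → ℝ}

lemma mulVec_dotProduct_mulVec_of_eigenvector (hQw : (Qᵀ * Q) *ᵥ w = μ • w) :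
    (Q *ᵥ w) ⬝ᵥ (Q *ᵥ w) = μ * (w ⬝ᵥ w) := by
  rw [mulVec_dotProduct_mulVec, hQw, dotProduct_smul, smul_eq_mul]

lemma eigenvalue_transpose_mul_self_nonneg (hw : w ≠ 0) (hQw : (Qᵀ * Q) *ᵥ w = μ • w) :
    0 ≤ μ :=
  nonneg_of_mul_nonneg_left
    (mulVec_dotProduct_mulVec_of_eigenvector hQw ▸ dotProduct_self_nonneg _)
    (dotProduct_self_pos hw)

lemma dotProduct_mulVec_le_sqrt_mul (hμ : ∀ v, v ⬝ᵥ (Qᵀ * Q) *ᵥ v ≤ μ * (v ⬝ᵥ v))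
    (a : m → ℝ) (b : n → ℝ) : a ⬝ᵥ Q *ᵥ b ≤ √μ * √((a ⬝ᵥ a) * (b ⬝ᵥ b)) := by
  have hQb : (Q *ᵥ b) ⬝ᵥ (Q *ᵥ b) ≤ μ * (b ⬝ᵥ b) := by
    rw [mulVec_dotProduct_mulVec]; exact hμ b
  calc a ⬝ᵥ Q *ᵥ b ≤ √(a ⬝ᵥ a) * √((Q *ᵥ b) ⬝ᵥ (Q *ᵥ b)) := dotProduct_le_sqrt_mul_sqrt _ _
    _ ≤ √(a ⬝ᵥ a) * √(μ * (b ⬝ᵥ b)) := by gcongr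
    _ = √μ * √((a ⬝ᵥ a) * (b ⬝ᵥ b)) := by
      rw [Real.sqrt_mul' _ (dotProduct_self_nonneg b), Real.sqrt_mul (dotProduct_self_nonneg a)]
      ring

lemma isGreatest_correlationRatios_one_one [DecidableEq m] [DecidableEq n] [Nonempty m]
    (hw : w ≠ 0) (hQw : (Qᵀ * Q) *ᵥ w = μ • w) (hμ : ∀ v, v ⬝ᵥ (Qᵀ * Q) *ᵥ v ≤ μ * (v ⬝ᵥ v)) :
    IsGreatest (correlationRatios Q 1 1) √μ := by
  have hQww := mulVec_dotProduct_mulVec_of_eigenvector hQw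
  have hww := dotProduct_self_pos hw
  refine ⟨?_, ?_⟩
  · by_cases hQw0 : Q *ᵥ w = 0
    · have hμ0 : μ = 0 := by
        rw [hQw0, zero_dotProduct] at hQww
        exact (mul_eq_zero.mp hQww.symm).resolve_right hww.ne'
      obtain ⟨a, ha⟩ := exists_ne (0 : m → ℝ)
      exact ⟨a, w, ha, hw, by simp [hQw0, hμ0]⟩
    · have hμpos : 0 < μ := pos_of_mul_pos_left (hQww ▸ dotProduct_self_pos hQw0) hww.le
      refine ⟨Q *ᵥ w, w, hQw0, hw, ?_⟩
      simp only [one_mulVec, hQww]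
      rw [Real.sqrt_mul (by positivity), Real.sqrt_mul hμpos.le, mul_assoc,
        Real.mul_self_sqrt hww.le]
      field_simp
      exact Real.sq_sqrt hμpos.le
  · rintro r ⟨a, b, ha, hb, rfl⟩
    simp only [one_mulVec]
    have hapos := dotProduct_self_pos ha
    have hbpos := dotProduct_self_pos hb
    rw [div_le_iff₀ (by positivity)]
    exact dotProduct_mulVec_le_sqrt_mul hμ a b

end CorrelationRatios

/-- union-intersection representation of the maximum canonical
correlation.  For `X : n × c` and `Y : n × d` with `XᵀX` and `YᵀY` positive
definite, the supremum over nonzero `u, v` of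
`uᵀXᵀYv / √((uᵀXᵀXu)(vᵀYᵀYv))` is attained, is nonnegative, and equals the
largest singular value of `Q = (XᵀX)^{-1/2} Xᵀ Y (YᵀY)^{-1/2}`, i.e. the
square root of the largest eigenvalue of `QᵀQ`. -/
theorem sup_canonical_correlation_eq_largest_singular_value
    (n c d : ℕ) (hc : 1 ≤ c) (hd : 1 ≤ d)
    (X : Matrix (Fin n) (Fin c) ℝ) (Y : Matrix (Fin n) (Fin d) ℝ)
    (hX : (Xᵀ * X).PosDef) (hY : (Yᵀ * Y).PosDef) :
    ∃ σ : ℝ, 0 ≤ σ ∧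
      IsGreatest {r : ℝ | ∃ u : Fin c → ℝ, ∃ v : Fin d → ℝ, u ≠ 0 ∧ v ≠ 0 ∧
          r = (u ⬝ᵥ (Xᵀ * Y).mulVec v)
              / Real.sqrt ((u ⬝ᵥ (Xᵀ * X).mulVec u) * (v ⬝ᵥ (Yᵀ * Y).mulVec v))} σ ∧
      IsGreatest {lam : ℝ | ∃ v : Fin d → ℝ, v ≠ 0 ∧
          ((((Matrix.PosSemidef.sqrt hX.posSemidef)⁻¹ * (Xᵀ * Y) * (Matrix.PosSemidef.sqrt hY.posSemidef)⁻¹)ᵀ *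
            ((Matrix.PosSemidef.sqrt hX.posSemidef)⁻¹ * (Xᵀ * Y) * (Matrix.PosSemidef.sqrt hY.posSemidef)⁻¹)).mulVec v = lam • v)}
        (σ ^ 2) := by
  have : Nonempty (Fin c) := ⟨⟨0, hc⟩⟩
  have : Nonempty (Fin d) := ⟨⟨0, hd⟩⟩
  set A := hX.posSemidef.sqrt
  set B := hY.posSemidef.sqrt
  set Q := A⁻¹ * (Xᵀ * Y) * B⁻¹
  obtain ⟨μ, w, hw, hQw, hμ⟩ :=
    (isHermitian_conjTranspose_mul_self Q).exists_eigenvector_forall_dotProduct_mulVec_le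
  have hA : IsUnit A := hX.isUnit_sqrt
  have hB : IsUnit B := hY.isUnit_sqrt
  have hK : Aᵀ * Q * B = Xᵀ * Y := by
    rw [hX.posSemidef.transpose_sqrt, Matrix.mul_assoc,
      nonsing_inv_mul_cancel_right _ _ ((isUnit_iff_isUnit_det B).mp hB),
      mul_nonsing_inv_cancel_left _ _ ((isUnit_iff_isUnit_det A).mp hA)]
  have hG : Aᵀ * 1 * A = Xᵀ * X := by
    rw [Matrix.mul_one, hX.posSemidef.transpose_sqrt, hX.posSemidef.sqrt_mul_self]
  have hH : Bᵀ * 1 * B = Yᵀ * Y := by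
    rw [Matrix.mul_one, hY.posSemidef.transpose_sqrt, hY.posSemidef.sqrt_mul_self]
  refine ⟨√μ, Real.sqrt_nonneg μ, ?_, ?_⟩
  · change IsGreatest (correlationRatios (Xᵀ * Y) (Xᵀ * X) (Yᵀ * Y)) √μ
    rw [← hK, ← hG, ← hH, correlationRatios_transpose_mul_mul _ _ _ hA hB]
    exact isGreatest_correlationRatios_one_one hw hQw hμ
  · rw [Real.sq_sqrt (eigenvalue_transpose_mul_self_nonneg hw hQw)]
    exact isGreatest_eigenvalues_of_forall_dotProduct_mulVec_le hw hQw hμ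
end

section
/- Let d ≥ 1, let λ₁, …, λ_d ∈ ℝ, and let t ∈ ℝ with t ≠ λ_i for every i. Set k = #{i : λ_i > t}. Then the excursion set A = {u ∈ S^{d−1} : ∑_{i=1}^d λ_i u_i² ≥ t} is homotopy equivalent to the unit sphere S^{k−1} ⊂ ℝ^k (where S^{−1} is the empty set, so A is empty when k = 0). -/
/-!
Put `wᵢ = λᵢ - t`, so that the excursion set is `{u ∈ S^{d-1} : ∑ wᵢ uᵢ² ≥ 0}`. As no `wᵢ`
vanishes, each of its points has a nonzero coordinate with `wᵢ > 0`. Multiplying the coordinates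
with `wᵢ < 0` by `c ∈ [0, 1]` keeps that coordinate and does not decrease the form, so after
renormalising we stay in the set; at `c = 0` we land in the unit sphere of the coordinates with
`wᵢ > 0`, a copy of `S^{k-1}` inside the set. This deformation retracts the set onto that sphere.
-/

open scoped ContinuousMap

namespace EuclideanSpace

variable {ι : Type*} (p : ι → Prop)

def restrictSubtype : EuclideanSpace ℝ ι →ₗ[ℝ] EuclideanSpace ℝ {i // p i} where
  toFun u := WithLp.toLp 2 fun i => u i
  map_add' _ _ := rfl
  map_smul' _ _ := rfl

@[simp]
lemma restrictSubtype_apply (u : EuclideanSpace ℝ ι) (j : {i // p i}) :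
    restrictSubtype p u j = u j := rfl

variable [DecidablePred p]

def extendByZero : EuclideanSpace ℝ {i // p i} →ₗ[ℝ] EuclideanSpace ℝ ι where
  toFun v := WithLp.toLp 2 fun i => if h : p i then v ⟨i, h⟩ else 0
  map_add' v v' := by ext i; by_cases h : p i <;> simp [h]
  map_smul' c v := by ext i; by_cases h : p i <;> simp [h]

lemma extendByZero_apply (v : EuclideanSpace ℝ {i // p i}) (i : ι) :
    extendByZero p v i = if h : p i then v ⟨i, h⟩ else 0 := rfl

@[simp]
lemma restrictSubtype_extendByZero (v : EuclideanSpace ℝ {i // p i}) :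
    restrictSubtype p (extendByZero p v) = v := by
  ext j
  simp [extendByZero_apply, j.2]

variable [Fintype ι]

lemma sum_extendByZero (f : ι → ℝ → ℝ) (hf : ∀ i, f i 0 = 0)
    (v : EuclideanSpace ℝ {i // p i}) :
    ∑ i, f i (extendByZero p v i) = ∑ j : {i // p i}, f j (v j) := by
  have h_pos : ∀ j : {i // p i}, extendByZero p v j = v j := fun j => dif_pos j.2
  have h_neg : ∀ j : {i // ¬ p i}, extendByZero p v j = 0 := fun j => dif_neg j.2
  simp [← Fintype.sum_subtype_add_sum_subtype p, h_pos, h_neg, hf]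

@[simp]
lemma norm_extendByZero (v : EuclideanSpace ℝ {i // p i}) :
    ‖extendByZero p v‖ = ‖v‖ := by
  rw [← sq_eq_sq₀ (norm_nonneg _) (norm_nonneg _), real_norm_sq_eq, real_norm_sq_eq,
    sum_extendByZero p (fun _ x => x ^ 2) (fun _ => zero_pow two_ne_zero)]

noncomputable def sphereCongrLeft {κ κ' : Type*} [Fintype κ] [Fintype κ'] (e : κ ≃ κ') (r : ℝ) :
    Metric.sphere (0 : EuclideanSpace ℝ κ) r ≃ₜ Metric.sphere (0 : EuclideanSpace ℝ κ') r :=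
  (LinearIsometryEquiv.piLpCongrLeft 2 ℝ ℝ e).toHomeomorph.subtype fun x => by simp

end EuclideanSpace

section WeightedSumSq

variable {ι : Type*} [Fintype ι] (w : ι → ℝ)

open EuclideanSpace

def weightedSumSq (u : EuclideanSpace ℝ ι) : ℝ := ∑ i, w i * u i ^ 2

lemma weightedSumSq_smul (c : ℝ) (u : EuclideanSpace ℝ ι) :
    weightedSumSq w (c • u) = c ^ 2 * weightedSumSq w u := by
  simp only [weightedSumSq, Finset.mul_sum, PiLp.smul_apply, smul_eq_mul]
  exact Finset.sum_congr rfl fun i _ => by ring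

lemma weightedSumSq_sub_const (t : ℝ) (u : EuclideanSpace ℝ ι) :
    weightedSumSq (fun i => w i - t) u = weightedSumSq w u - t * ‖u‖ ^ 2 := by
  simp only [weightedSumSq, real_norm_sq_eq, Finset.mul_sum, ← Finset.sum_sub_distrib]
  exact Finset.sum_congr rfl fun i _ => by ring

lemma weightedSumSq_extendByZero_nonneg (v : EuclideanSpace ℝ {i // 0 < w i}) :
    0 ≤ weightedSumSq w (extendByZero (0 < w ·) v) := by
  rw [weightedSumSq, sum_extendByZero _ (fun i x => w i * x ^ 2) (fun _ => by simp)]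
  exact Finset.sum_nonneg fun j _ => mul_nonneg j.2.le (sq_nonneg _)

lemma exists_pos_weight_ne_zero (hw : ∀ i, w i ≠ 0) {u : EuclideanSpace ℝ ι} (hu : u ≠ 0)
    (hq : 0 ≤ weightedSumSq w u) : ∃ i, 0 < w i ∧ u i ≠ 0 := by
  by_contra! hpos
  have hterm : ∀ i, w i * u i ^ 2 ≤ 0 := fun i => by
    rcases (hw i).lt_or_gt with hneg | hpos'
    · exact mul_nonpos_of_nonpos_of_nonneg hneg.le (sq_nonneg _)
    · simp [hpos i hpos']
  have hzero : ∀ i, w i * u i ^ 2 = 0 := fun i =>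
    (Finset.sum_eq_zero_iff_of_nonpos fun i _ => hterm i).1
      (le_antisymm (Finset.sum_nonpos fun i _ => hterm i) hq) i (Finset.mem_univ i)
  exact hu (by ext i; simpa [hw i] using hzero i)

end WeightedSumSq

section Deformation

variable {ι : Type*} (w : ι → ℝ)

open EuclideanSpace

noncomputable def scaleNonposCoords (c : ℝ) (u : EuclideanSpace ℝ ι) : EuclideanSpace ℝ ι :=
  WithLp.toLp 2 fun i => if 0 < w i then u i else c * u i

lemma continuous_scaleNonposCoords :
    Continuous fun p : ℝ × EuclideanSpace ℝ ι => scaleNonposCoords w p.1 p.2 := by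
  refine (PiLp.continuous_toLp 2 _).comp (continuous_pi fun i => ?_)
  by_cases h : 0 < w i <;> simp only [h, if_true, if_false] <;> fun_prop

lemma scaleNonposCoords_apply_of_pos (c : ℝ) (u : EuclideanSpace ℝ ι) {i : ι} (hi : 0 < w i) :
    scaleNonposCoords w c u i = u i := if_pos hi

@[simp]
lemma scaleNonposCoords_one (u : EuclideanSpace ℝ ι) : scaleNonposCoords w 1 u = u := by
  ext i
  simp [scaleNonposCoords]

lemma scaleNonposCoords_zero (u : EuclideanSpace ℝ ι) :
    scaleNonposCoords w 0 u = extendByZero (0 < w ·) (restrictSubtype (0 < w ·) u) := by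
  ext i
  by_cases h : 0 < w i <;> simp [scaleNonposCoords, extendByZero_apply, h]

variable [Fintype ι]

lemma weightedSumSq_le_scaleNonposCoords {c : ℝ} (hc : c ^ 2 ≤ 1) (u : EuclideanSpace ℝ ι) :
    weightedSumSq w u ≤ weightedSumSq w (scaleNonposCoords w c u) := by
  refine Finset.sum_le_sum fun i _ => ?_
  by_cases h : 0 < w i
  · simp [scaleNonposCoords, h]
  · simp only [scaleNonposCoords, h, if_false]
    nlinarith [not_lt.1 h, sq_nonneg (u i), mul_nonneg (sub_nonneg.2 hc) (sq_nonneg (u i))]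

end Deformation

section Excursion

variable {ι : Type*} [Fintype ι]

open EuclideanSpace Metric

def excursionSet (w : ι → ℝ) (t : ℝ) : Set (EuclideanSpace ℝ ι) :=
  {u | ‖u‖ = 1 ∧ t ≤ weightedSumSq w u}

lemma excursionSet_sub_const (w : ι → ℝ) (t : ℝ) :
    excursionSet (fun i => w i - t) 0 = excursionSet w t := by
  ext u
  refine and_congr_right fun hu => ?_
  rw [weightedSumSq_sub_const, hu, one_pow, mul_one, sub_nonneg]

variable (w : ι → ℝ)

lemma inv_norm_smul_mem_excursionSet_zero {v : EuclideanSpace ℝ ι} (hv : v ≠ 0)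
    (hq : 0 ≤ weightedSumSq w v) : ‖v‖⁻¹ • v ∈ excursionSet w 0 :=
  ⟨norm_smul_inv_norm hv, by rw [weightedSumSq_smul]; positivity⟩

noncomputable def excursionSet.ofSphere :
    C(sphere (0 : EuclideanSpace ℝ {i // 0 < w i}) 1, excursionSet w 0) where
  toFun v := ⟨extendByZero (0 < w ·) v,
    (norm_extendByZero (0 < w ·) v).trans (mem_sphere_zero_iff_norm.1 v.2),
    weightedSumSq_extendByZero_nonneg w v⟩
  continuous_toFun := ((extendByZero (0 < w ·)).continuous_of_finiteDimensional.comp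
    continuous_subtype_val).subtype_mk _

variable {w} (hw : ∀ i, w i ≠ 0)
include hw

lemma exists_pos_weight_ne_zero_of_mem_excursionSet {u : EuclideanSpace ℝ ι}
    (hu : u ∈ excursionSet w 0) : ∃ i, 0 < w i ∧ u i ≠ 0 :=
  exists_pos_weight_ne_zero w hw (ne_zero_of_norm_ne_zero (by simp [hu.1])) hu.2

lemma restrictSubtype_ne_zero_of_mem_excursionSet {u : EuclideanSpace ℝ ι}
    (hu : u ∈ excursionSet w 0) : restrictSubtype (0 < w ·) u ≠ 0 := by
  obtain ⟨i, hi, hui⟩ := exists_pos_weight_ne_zero_of_mem_excursionSet hw hu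
  exact fun h => hui (congrArg (· ⟨i, hi⟩) h)

lemma scaleNonposCoords_ne_zero_of_mem_excursionSet (c : ℝ) {u : EuclideanSpace ℝ ι}
    (hu : u ∈ excursionSet w 0) : scaleNonposCoords w c u ≠ 0 := by
  obtain ⟨i, hi, hui⟩ := exists_pos_weight_ne_zero_of_mem_excursionSet hw hu
  exact fun h => hui (by simpa [scaleNonposCoords_apply_of_pos w c u hi] using congrArg (· i) h)

noncomputable def excursionSet.toSphere :
    C(excursionSet w 0, sphere (0 : EuclideanSpace ℝ {i // 0 < w i}) 1) where
  toFun u := ⟨‖restrictSubtype (0 < w ·) u.1‖⁻¹ • restrictSubtype (0 < w ·) u.1,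
    mem_sphere_zero_iff_norm.2 <|
      norm_smul_inv_norm (restrictSubtype_ne_zero_of_mem_excursionSet hw u.2)⟩
  continuous_toFun := by
    have h : Continuous fun u : excursionSet w 0 => restrictSubtype (0 < w ·) u.1 :=
      (restrictSubtype (0 < w ·)).continuous_of_finiteDimensional.comp continuous_subtype_val
    exact ((h.norm.inv₀ fun u => norm_ne_zero_iff.2
      (restrictSubtype_ne_zero_of_mem_excursionSet hw u.2)).smul h).subtype_mk _

noncomputable def excursionSet.retractionHomotopy :
    ((excursionSet.ofSphere w).comp (excursionSet.toSphere hw)).Homotopy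
      (ContinuousMap.id (excursionSet w 0)) where
  toFun p := ⟨‖scaleNonposCoords w p.1 p.2.1‖⁻¹ • scaleNonposCoords w p.1 p.2.1,
    inv_norm_smul_mem_excursionSet_zero w
      (scaleNonposCoords_ne_zero_of_mem_excursionSet hw _ p.2.2)
      (p.2.2.2.trans (weightedSumSq_le_scaleNonposCoords w (pow_le_one₀ p.1.2.1 p.1.2.2) _))⟩
  continuous_toFun := by
    have h : Continuous fun p : unitInterval × excursionSet w 0 =>
        scaleNonposCoords w p.1 p.2.1 :=
      (continuous_scaleNonposCoords w).comp
        ((continuous_subtype_val.comp continuous_fst).prodMk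
          (continuous_subtype_val.comp continuous_snd))
    exact ((h.norm.inv₀ fun p => norm_ne_zero_iff.2
      (scaleNonposCoords_ne_zero_of_mem_excursionSet hw _ p.2.2)).smul h).subtype_mk _
  map_zero_left u := by
    ext1
    simp [excursionSet.ofSphere, excursionSet.toSphere, scaleNonposCoords_zero]
  map_one_left u := by
    ext1
    simp [u.2.1]

noncomputable def excursionSet.homotopyEquivSphere :
    excursionSet w 0 ≃ₕ sphere (0 : EuclideanSpace ℝ {i // 0 < w i}) 1 where
  toFun := excursionSet.toSphere hw
  invFun := excursionSet.ofSphere w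
  left_inv := ⟨excursionSet.retractionHomotopy hw⟩
  right_inv := by
    convert ContinuousMap.Homotopic.refl _
    ext1 v
    simp [excursionSet.ofSphere, excursionSet.toSphere, mem_sphere_zero_iff_norm.1 v.2]

end Excursion

noncomputable def sphereCongrLeft {κ κ' : Type*} [Fintype κ] [Fintype κ']
    (e : κ ≃ κ') (r : ℝ) :
    Metric.sphere (0 : EuclideanSpace ℝ κ) r ≃ₜ Metric.sphere (0 : EuclideanSpace ℝ κ') r :=
  (LinearIsometryEquiv.piLpCongrLeft 2 ℝ ℝ e).toHomeomorph.subtype fun x => by simp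

theorem excursion_set_of_quadratic_form_homotopyEquiv_sphere_general
    (d : ℕ) (lam : Fin d → ℝ) (t : ℝ) (ht : ∀ i, t ≠ lam i) :
    Nonempty
      (({u : EuclideanSpace ℝ (Fin d) // ‖u‖ = 1 ∧ t ≤ ∑ i, lam i * (u i) ^ 2}) ≃ₕ
        (Metric.sphere
          (0 : EuclideanSpace ℝ (Fin ((Finset.univ.filter fun i => t < lam i).card))) 1)) := by
  have hw : ∀ i, lam i - t ≠ 0 := fun i => sub_ne_zero.2 (ht i).symm
  have hk : Fintype.card {i // 0 < lam i - t} = (Finset.univ.filter fun i => t < lam i).card := by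
    simp [Fintype.card_subtype, sub_pos]
  exact ⟨(Homeomorph.setCongr (excursionSet_sub_const lam t)).symm.toHomotopyEquiv.trans <|
    (excursionSet.homotopyEquivSphere hw).trans
      (EuclideanSpace.sphereCongrLeft (Fintype.equivFinOfCardEq hk) 1).toHomotopyEquiv⟩

/-- for `λ₁, …, λ_d ∈ ℝ` and `t` distinct from every `λ_i`, with
`k = #{i : λ_i > t}`, the excursion set `{u ∈ S^{d-1} : ∑ λ_i u_i² ≥ t}` is
homotopy equivalent to the unit sphere `S^{k-1} ⊂ ℝ^k` (the empty set when
`k = 0`). -/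
theorem excursion_set_of_quadratic_form_homotopyEquiv_sphere
    (d : ℕ) (hd : 1 ≤ d) (lam : Fin d → ℝ) (t : ℝ) (ht : ∀ i, t ≠ lam i) :
    Nonempty
      (({u : EuclideanSpace ℝ (Fin d) // ‖u‖ = 1 ∧ t ≤ ∑ i, lam i * (u i) ^ 2}) ≃ₕ
        (Metric.sphere
          (0 : EuclideanSpace ℝ (Fin ((Finset.univ.filter fun i => t < lam i).card))) 1)) :=
  excursion_set_of_quadratic_form_homotopyEquiv_sphere_general d lam t ht
end

section
/- Let d ≥ 1, let W be a symmetric positive definite d × d real matrix, let z ∈ ℝ^d, and let t > 0 satisfy zᵀW⁻¹z > t. Then the set {u ∈ S^{d−1} : (zᵀu)² ≥ t · uᵀWu} is homotopy equivalent to the two-point discrete space S⁰ (a pair of disjoint contractible caps). -/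
open Matrix
open scoped ContinuousMap

/-!
Write `ℓ u = zᵀu` and `B(u, v) = t uᵀWv`, so the excursion set is the unit sphere intersected
with the double cone `C = {u | B(u, u) ≤ ℓ(u)²}`. As `B` is positive definite, `ℓ` does not
vanish on `C ∖ {0}`, and by Cauchy–Schwarz the half `{u ∈ C | 0 < ℓ u}` is convex. Hence the
sign of `ℓ` splits the excursion set into two pieces, each of which radially deformation retracts
along straight segments onto one of the antipodal points `±W⁻¹z / ‖W⁻¹z‖`.
-/

theorem LinearMap.BilinForm.convex_setOf_apply_self_le_sq_and_pos {M : Type*} [AddCommGroup M]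
    [Module ℝ M] (B : LinearMap.BilinForm ℝ M) (hB : ∀ x, 0 ≤ B x x) (ℓ : M →ₗ[ℝ] ℝ) :
    Convex ℝ {x | B x x ≤ ℓ x ^ 2 ∧ 0 < ℓ x} := by
  rintro x ⟨hx, hx₀⟩ y ⟨hy, hy₀⟩ a b ha hb hab
  -- Cauchy–Schwarz for the symmetrization `B + B.flip`, since `B` need not be symmetric.
  have hcross : B x y + B y x ≤ 2 * (ℓ x * ℓ y) := by
    have cs := (B + B.flip).apply_mul_apply_le_of_forall_zero_le
      (fun v => by simpa using add_nonneg (hB v) (hB v)) x y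
    simp only [LinearMap.add_apply, LinearMap.BilinForm.flip_apply] at cs
    refine (abs_le_of_sq_le_sq' ?_ (by positivity)).2
    nlinarith [mul_le_mul hx hy (hB y) (sq_nonneg _)]
  simp only [Set.mem_ofPred_eq, map_add, map_smul, LinearMap.add_apply, LinearMap.smul_apply,
    smul_eq_mul]
  constructor
  · nlinarith [mul_le_mul_of_nonneg_left hx (sq_nonneg a),
      mul_le_mul_of_nonneg_left hy (sq_nonneg b),
      mul_le_mul_of_nonneg_left hcross (mul_nonneg ha hb)]
  · rcases ha.lt_or_eq with ha | rfl
    · positivity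
    · simp_all

theorem LinearMap.BilinForm.smul_apply_self_le_sq {M : Type*} [AddCommGroup M] [Module ℝ M]
    (B : LinearMap.BilinForm ℝ M) (ℓ : M →ₗ[ℝ] ℝ) (c : ℝ) {x : M} (hx : B x x ≤ ℓ x ^ 2) :
    B (c • x) (c • x) ≤ ℓ (c • x) ^ 2 := by
  simp only [map_smul, LinearMap.smul_apply, smul_eq_mul]
  nlinarith [mul_le_mul_of_nonneg_left hx (sq_nonneg c)]

theorem abs_div_abs_self {K : Type*} [Field K] [LinearOrder K] [IsStrictOrderedRing K] {r : K}
    (hr : r ≠ 0) : |(r / |r|)| = 1 := by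
  rw [abs_div, abs_abs, div_self (abs_ne_zero.mpr hr)]

theorem div_abs_self_mul_self {K : Type*} [Field K] [LinearOrder K] (r : K) :
    r / |r| * r = |r| := by
  rw [div_mul_eq_mul_div, ← sq, ← sq_abs, sq, mul_self_div_self]

theorem segment_to_sign_smul_mem_and_ne_zero {M : Type*} [AddCommGroup M] [Module ℝ M]
    (ℓ : M →ₗ[ℝ] ℝ) {C : Set M} (hC : ∀ c : ℝ, ∀ x ∈ C, c • x ∈ C)
    (hCℓ : Convex ℝ {x ∈ C | 0 < ℓ x}) {u x₀ : M} (hu : u ∈ C) (hℓu : ℓ u ≠ 0) (hx₀ : x₀ ∈ C)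
    (hℓx₀ : 0 < ℓ x₀) {s : ℝ} (hs₀ : 0 ≤ s) (hs₁ : s ≤ 1) :
    (1 - s) • u + (s * (ℓ u / |ℓ u|)) • x₀ ∈ C ∧ (1 - s) • u + (s * (ℓ u / |ℓ u|)) • x₀ ≠ 0 := by
  set ε := ℓ u / |ℓ u|
  have hεε : ε * ε = 1 := by rw [← abs_mul_abs_self, abs_div_abs_self hℓu, one_mul]
  have hεu : ε • u ∈ {x ∈ C | 0 < ℓ x} :=
    ⟨hC ε u hu, by rw [map_smul, smul_eq_mul, div_abs_self_mul_self]; exact abs_pos.2 hℓu⟩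
  -- Rescaled by the sign `ε`, the segment runs inside the convex half `{x ∈ C | 0 < ℓ x}`.
  have hmem : ε • ((1 - s) • u + (s * ε) • x₀) ∈ {x ∈ C | 0 < ℓ x} := by
    convert hCℓ hεu ⟨hx₀, hℓx₀⟩ (sub_nonneg.2 hs₁) hs₀ (sub_add_cancel 1 s) using 1
    calc ε • ((1 - s) • u + (s * ε) • x₀) = (1 - s) • ε • u + (s * (ε * ε)) • x₀ := by module
      _ = (1 - s) • ε • u + s • x₀ := by rw [hεε, mul_one]
  refine ⟨?_, fun h => by simp [h] at hmem⟩
  simpa only [smul_smul, hεε, one_smul] using hC ε _ hmem.1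

theorem ContinuousMap.homotopic_of_homotopy_in_cone {X E : Type*} [TopologicalSpace X]
    [NormedAddCommGroup E] [NormedSpace ℝ E] {C : Set E} (hC : ∀ c : ℝ, ∀ x ∈ C, c • x ∈ C)
    {f₀ f₁ : C(X, {u : E // ‖u‖ = 1 ∧ u ∈ C})} (F : unitInterval × X → E) (hF : Continuous F)
    (hF₀ : ∀ x, F (0, x) = f₀ x) (hF₁ : ∀ x, F (1, x) = f₁ x) (hFC : ∀ p, F p ∈ C ∧ F p ≠ 0) :
    f₀.Homotopic f₁ :=
  ⟨{ toFun p := ⟨‖F p‖⁻¹ • F p, norm_smul_inv_norm (hFC p).2, hC _ _ (hFC p).1⟩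
     continuous_toFun :=
       ((hF.norm.inv₀ fun p => norm_ne_zero_iff.2 (hFC p).2).smul hF).subtype_mk _
     map_zero_left x := by ext; simp [hF₀, (f₀ x).2.1]
     map_one_left x := by ext; simp [hF₁, (f₁ x).2.1] }⟩

theorem EuclideanSpace.norm_eq_abs_apply_zero (x : EuclideanSpace ℝ (Fin 1)) : ‖x‖ = |x 0| := by
  simp [EuclideanSpace.norm_eq, Real.sqrt_sq_eq_abs]

theorem EuclideanSpace.abs_apply_zero_of_mem_sphere
    (v : Metric.sphere (0 : EuclideanSpace ℝ (Fin 1)) 1) :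
    |(v : EuclideanSpace ℝ (Fin 1)) 0| = 1 := by
  rw [← EuclideanSpace.norm_eq_abs_apply_zero]; simp

theorem nonempty_homotopyEquiv_sphere_fin_one_of_convex {E : Type*} [NormedAddCommGroup E]
    [NormedSpace ℝ E] (ℓ : E →L[ℝ] ℝ) {C : Set E} (hC : ∀ c : ℝ, ∀ x ∈ C, c • x ∈ C)
    (hCℓ : Convex ℝ {x ∈ C | 0 < ℓ x}) (hℓ : ∀ x ∈ C, x ≠ 0 → ℓ x ≠ 0)
    {x₀ : E} (hx₀ : x₀ ∈ C) (hℓx₀ : 0 < ℓ x₀) :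
    Nonempty ({u : E // ‖u‖ = 1 ∧ u ∈ C} ≃ₕ Metric.sphere (0 : EuclideanSpace ℝ (Fin 1)) 1) := by
  have hℓS (u : {u : E // ‖u‖ = 1 ∧ u ∈ C}) : ℓ u ≠ 0 :=
    hℓ u u.2.2 (ne_zero_of_norm_ne_zero (by simp [u.2.1]))
  set σ : {u : E // ‖u‖ = 1 ∧ u ∈ C} → ℝ := fun u => ℓ u / |ℓ u|
  have hσ : Continuous σ := by fun_prop (disch := exact fun u => abs_ne_zero.2 (hℓS u))
  have hx₀_ne : x₀ ≠ 0 := by rintro rfl; simp at hℓx₀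
  set u₀ := ‖x₀‖⁻¹ • x₀
  have hu₀ : ‖u₀‖ = 1 ∧ u₀ ∈ C := ⟨norm_smul_inv_norm hx₀_ne, hC _ x₀ hx₀⟩
  have hℓu₀ : 0 < ℓ u₀ := by simp only [u₀, map_smul, smul_eq_mul]; positivity
  let f : C({u : E // ‖u‖ = 1 ∧ u ∈ C}, Metric.sphere (0 : EuclideanSpace ℝ (Fin 1)) 1) :=
    ⟨fun u => ⟨WithLp.toLp 2 fun _ => σ u, by
      simp [EuclideanSpace.norm_eq_abs_apply_zero, σ, abs_div_abs_self (hℓS u)]⟩, by fun_prop⟩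
  let g : C(Metric.sphere (0 : EuclideanSpace ℝ (Fin 1)) 1, {u : E // ‖u‖ = 1 ∧ u ∈ C}) :=
    ⟨fun v => ⟨(v : EuclideanSpace ℝ (Fin 1)) 0 • u₀, by
      rw [norm_smul, Real.norm_eq_abs, EuclideanSpace.abs_apply_zero_of_mem_sphere, hu₀.1,
        one_mul],
      hC _ _ hu₀.2⟩, by fun_prop⟩
  have hfg : f.comp g = ContinuousMap.id _ := by
    ext v i
    obtain rfl : i = 0 := Subsingleton.elim i 0
    show ℓ (_ • u₀) / |ℓ (_ • u₀)| = _
    rw [map_smul, smul_eq_mul, abs_mul, EuclideanSpace.abs_apply_zero_of_mem_sphere v,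
      abs_of_pos hℓu₀, one_mul, mul_div_cancel_right₀ _ hℓu₀.ne']
    rfl
  have hgf : (ContinuousMap.id _).Homotopic (g.comp f) :=
    ContinuousMap.homotopic_of_homotopy_in_cone hC
      (fun p => (1 - (p.1 : ℝ)) • (p.2 : E) + (p.1 * σ p.2) • u₀) (by fun_prop)
      (fun u => by simp)
      (fun u => by
        simp only [Set.Icc.coe_one, sub_self, zero_smul, one_mul, zero_add,
          ContinuousMap.comp_apply]
        rfl)
      (fun p => segment_to_sign_smul_mem_and_ne_zero ℓ.toLinearMap hC hCℓ p.2.2.2 (hℓS p.2)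
        hu₀.2 hℓu₀ p.1.2.1 p.1.2.2)
  exact ⟨⟨f, g, hgf.symm, hfg ▸ .refl _⟩⟩

theorem Matrix.PosDef.toBilin'_apply_self_pos {n : Type*} [Fintype n] [DecidableEq n]
    {W : Matrix n n ℝ} (hW : W.PosDef) {x : n → ℝ} (hx : x ≠ 0) : 0 < Matrix.toBilin' W x x := by
  simpa [Matrix.toBilin'_apply'] using hW.dotProduct_mulVec_pos hx

theorem Matrix.toBilin'_nonsing_inv_mulVec_self {n R : Type*} [Fintype n] [DecidableEq n]
    [CommRing R] {W : Matrix n n R} (hW : IsUnit W.det) (z : n → R) :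
    Matrix.toBilin' W (W⁻¹ *ᵥ z) (W⁻¹ *ᵥ z) = z ⬝ᵥ W⁻¹ *ᵥ z := by
  rw [Matrix.toBilin'_apply', Matrix.mulVec_mulVec, Matrix.mul_nonsing_inv _ hW,
    Matrix.one_mulVec, dotProduct_comm]

theorem hotelling_excursion_set_homotopyEquiv_S0_general
    (d : ℕ) (W : Matrix (Fin d) (Fin d) ℝ) (hW : W.PosDef)
    (z : Fin d → ℝ) (t : ℝ) (ht : 0 < t) (hzt : t < z ⬝ᵥ W⁻¹.mulVec z) :
    Nonempty
      (({u : EuclideanSpace ℝ (Fin d) // ‖u‖ = 1 ∧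
          t * (∑ i, ∑ j, u i * W i j * u j) ≤ (∑ i, z i * u i) ^ 2}) ≃ₕ
        (Metric.sphere (0 : EuclideanSpace ℝ (Fin 1)) 1)) := by
  let ℓ : EuclideanSpace ℝ (Fin d) →L[ℝ] ℝ := ∑ i, z i • EuclideanSpace.proj i
  let e := (WithLp.linearEquiv 2 ℝ (Fin d → ℝ)).toLinearMap
  let B : LinearMap.BilinForm ℝ (EuclideanSpace ℝ (Fin d)) := t • (Matrix.toBilin' W).compl₁₂ e e
  have hB_pos (u : EuclideanSpace ℝ (Fin d)) (hu : u ≠ 0) : 0 < B u u :=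
    mul_pos ht (hW.toBilin'_apply_self_pos (x := u.ofLp) (by simpa using hu))
  set x₀ := WithLp.toLp 2 (W⁻¹ *ᵥ z)
  have hℓx₀ : ℓ x₀ = z ⬝ᵥ W⁻¹ *ᵥ z := by simp [ℓ, x₀, dotProduct]
  have hBx₀ : B x₀ x₀ = t * z ⬝ᵥ W⁻¹ *ᵥ z := by
    simp [B, e, x₀, Matrix.toBilin'_nonsing_inv_mulVec_self hW.det_pos.ne'.isUnit]
  have hC : {u | B u u ≤ ℓ u ^ 2} =
      {u : EuclideanSpace ℝ (Fin d) |
        t * (∑ i, ∑ j, u i * W i j * u j) ≤ (∑ i, z i * u i) ^ 2} := by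
    ext u
    simp [B, e, ℓ, Matrix.toBilin'_apply]
  have key := nonempty_homotopyEquiv_sphere_fin_one_of_convex ℓ (C := {u | B u u ≤ ℓ u ^ 2})
    (fun c x hx => B.smul_apply_self_le_sq ℓ.toLinearMap c hx)
    (B.convex_setOf_apply_self_le_sq_and_pos
      (fun u => (eq_or_ne u 0).elim (fun hu => by simp [hu]) fun hu => (hB_pos u hu).le)
      ℓ.toLinearMap)
    (fun x hx hx₀ hℓx => by have := hB_pos x hx₀; simp [hℓx] at hx; linarith)
    (x₀ := x₀) (by rw [Set.mem_ofPred_eq, hℓx₀, hBx₀]; nlinarith) (by rw [hℓx₀]; linarith)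
  rwa [hC] at key

/-- for `W` symmetric positive definite, `z ∈ ℝ^d` and `t > 0`
with `zᵀW⁻¹z > t`, the set `{u ∈ S^{d-1} : (zᵀu)² ≥ t uᵀWu}` is homotopy
equivalent to the two-point discrete space `S⁰` (a pair of disjoint
contractible caps). -/
theorem hotelling_excursion_set_homotopyEquiv_S0
    (d : ℕ) (hd : 1 ≤ d) (W : Matrix (Fin d) (Fin d) ℝ) (hW : W.PosDef)
    (z : Fin d → ℝ) (t : ℝ) (ht : 0 < t) (hzt : t < z ⬝ᵥ W⁻¹.mulVec z) :
    Nonempty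
      (({u : EuclideanSpace ℝ (Fin d) // ‖u‖ = 1 ∧
          t * (∑ i, ∑ j, u i * W i j * u j) ≤ (∑ i, z i * u i) ^ 2}) ≃ₕ
        (Metric.sphere (0 : EuclideanSpace ℝ (Fin 1)) 1)) :=
  hotelling_excursion_set_homotopyEquiv_S0_general d W hW z t ht hzt
end
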